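/- arXiv:0706.0204 — 2 statements merged into one kernel-verified Lean document; each statement's English description precedes it below -/
import Mathlib

section
/- For every u ≥ 0, ∑_{k≥1} e^{−uk} (α/Γ(2−α)) · Γ(k+1−α)/(k+1)! = 1 + ((e^u − 1)/(α−1)) · ((1 − e^{−u})^{α−1} − 1). In other words, the Laplace transform of the random variable X with ℙ(X = k) = (α/Γ(2−α)) Γ(k+1−α)/(k+1)! is φ(u) = 1 + ((e^u − 1)/(α−1))((1 − e^{−u})^{α−1} − 1). -/
open MeasureTheory ProbabilityTheory Filter Real Topology

noncomputable section

/-- `λ_{b,k} = ∫_{(0,1)} x^{k-2} (1-x)^{b-k} Λ(dx)`. -/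
def coalRate (Λ : Measure ℝ) (b k : ℕ) : ℝ :=
  ∫ x in Set.Ioo (0 : ℝ) 1, x ^ (k - 2) * (1 - x) ^ (b - k) ∂Λ

/-- `g_b = ∑_{ℓ=1}^{b-1} binom(b, ℓ+1) λ_{b,ℓ+1}`. -/
def coalG (Λ : Measure ℝ) (b : ℕ) : ℝ :=
  ∑ ℓ ∈ Finset.Icc 1 (b - 1), (b.choose (ℓ + 1) : ℝ) * coalRate Λ b (ℓ + 1)

/-- `ρ(t) = ν((t,1])` where `ν(dx) = x^{-2} Λ(dx)`. -/
def coalRho (Λ : Measure ℝ) (t : ℝ) : ℝ :=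
  ∫ x in Set.Ioc t 1, x ^ (-2 : ℤ) ∂Λ

/-- `ρ(t) = C₀ t^{-α} + O(t^{-α+ζ})` on `(0,1]`. -/
def RhoBound (Λ : Measure ℝ) (C₀ α ζ : ℝ) : Prop :=
  ∃ C : ℝ, ∀ t ∈ Set.Ioc (0 : ℝ) 1, |coalRho Λ t - C₀ * t ^ (-α)| ≤ C * t ^ (ζ - α)

/-- `Y` is a Markov chain on the positive integers started at `n`, with `1` absorbing and
one-step transition probabilities `P(b, b-ℓ) = binom(b,ℓ+1) λ_{b,ℓ+1} / g_b`. -/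
def IsCoalChain (Λ : Measure ℝ) {Ω : Type*} [MeasurableSpace Ω] (μ : Measure Ω)
    (Y : ℕ → Ω → ℕ) (n : ℕ) : Prop :=
  (∀ k, Measurable (Y k)) ∧
  (∀ ω, Y 0 ω = n) ∧
  (∀ k ω, 1 ≤ Y k ω) ∧
  (∀ k ω, Y k ω = 1 → Y (k + 1) ω = 1) ∧
  ∀ k (y : ℕ → ℕ) (b ℓ : ℕ), 2 ≤ b → 1 ≤ ℓ → ℓ ≤ b - 1 → y k = b →
    μ {ω | (∀ j ≤ k, Y j ω = y j) ∧ Y (k + 1) ω = b - ℓ}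
      = ENNReal.ofReal ((b.choose (ℓ + 1) : ℝ) * coalRate Λ b (ℓ + 1) / coalG Λ b)
        * μ {ω | ∀ j ≤ k, Y j ω = y j}

/-- `τ_n`, the number of jumps until absorption at `1`. -/
def coalTau {Ω : Type*} (Y : ℕ → Ω → ℕ) (ω : Ω) : ℕ :=
  sInf {k | Y k ω = 1}

/-- `v(t) = ∫_0^t (1 - r/γ)^{-γ} dr`. -/
def vfun (γ : ℝ) (t : ℝ) : ℝ :=
  ∫ r in (0 : ℝ)..t, (1 - r / γ) ^ (-γ)

/-- `L̂_t^{(n)} = ∑_{k=0}^{⌊nt⌋ ∧ (τ_n - 1)} Y_k^{1-α}`. -/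
def Lhat (α : ℝ) {Ω : Type*} (Y : ℕ → Ω → ℕ) (n : ℕ) (t : ℝ) (ω : Ω) : ℝ :=
  ∑ k ∈ Finset.range (min (⌊(n : ℝ) * t⌋₊) (coalTau Y ω - 1) + 1), (Y k ω : ℝ) ^ (1 - α)

/-- `L̃_t^{(n)} = ∑_{k=0}^{⌊nt⌋ ∧ (τ_n - 1)} Y_k / g_{Y_k}`. -/
def Ltilde (Λ : Measure ℝ) {Ω : Type*} (Y : ℕ → Ω → ℕ) (n : ℕ) (t : ℝ) (ω : Ω) : ℝ :=
  ∑ k ∈ Finset.range (min (⌊(n : ℝ) * t⌋₊) (coalTau Y ω - 1) + 1),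
    (Y k ω : ℝ) / coalG Λ (Y k ω)

/-- `L_t^{(n)} = ∑_{k=0}^{⌊nt⌋ ∧ (τ_n - 1)} (Y_k / g_{Y_k}) E_k`. -/
def Llen (Λ : Measure ℝ) {Ω : Type*} (Y : ℕ → Ω → ℕ) (Ex : ℕ → Ω → ℝ) (n : ℕ) (t : ℝ)
    (ω : Ω) : ℝ :=
  ∑ k ∈ Finset.range (min (⌊(n : ℝ) * t⌋₊) (coalTau Y ω - 1) + 1),
    (Y k ω : ℝ) / coalG Λ (Y k ω) * Ex k ω

/-- The exponential random variables `(E_k)` are i.i.d. with mean one and independent of `Y`. -/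
def IsExpFamily {Ω : Type*} [MeasurableSpace Ω] (μ : Measure Ω) (Ex : ℕ → Ω → ℝ)
    (Y : ℕ → ℕ → Ω → ℕ) : Prop :=
  (∀ k, Measurable (Ex k)) ∧
  (∀ k, ∀ s : ℝ, 0 ≤ s → μ {ω | s < Ex k ω} = ENNReal.ofReal (Real.exp (-s))) ∧
  iIndepFun Ex μ ∧
  IndepFun (fun ω (k : ℕ) => Ex k ω) (fun ω (k : ℕ) (n : ℕ) => Y n k ω) μ

end

/-!
Write `T k = Γ(k + 2 - α) / (Γ(2 - α) (k + 1)!)`. Since `T (k + 1) = (k + 2 - α) / (k + 2) · T k`,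
the weights of the law are the differences `T k - T (k + 1)`, so `T k = ℙ(X > k)`. With
`Γ(2 - α) = (1 - α) Γ(1 - α)`, the generating function `∑ T k x^(k+1)` is the negative binomial
series of `(1 - x)^(α - 1)`, minus its constant term, divided by `1 - α`. Summation by parts gives
`φ` at `x = e^(-u) < 1`. At `u = 0` the sum telescopes to `T 0 = 1`, because `T k ≤ 1 / (k + 1)`.
-/

open scoped Nat

theorem Real.Gamma_add_nat_eq_ascPochhammer_eval_mul {s : ℝ} (hs : ∀ m : ℕ, s ≠ -m) (n : ℕ) :
    Gamma (s + n) = (ascPochhammer ℝ n).eval s * Gamma s := by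
  induction n with
  | zero => simp
  | succ n ih =>
    have hsn : s + n ≠ 0 := fun h => hs n (by linarith)
    rw [ascPochhammer_succ_eval, Nat.cast_succ, ← add_assoc, Gamma_add_one hsn, ih]
    ring

theorem Real.multichoose_eq_Gamma_div {s : ℝ} (hs : ∀ m : ℕ, s ≠ -m) (n : ℕ) :
    Ring.multichoose s n = Gamma (s + n) / (Gamma s * n !) := by
  have hfac : (n ! : ℝ) * Ring.multichoose s n = (ascPochhammer ℝ n).eval s := by
    rw [← nsmul_eq_mul, Ring.factorial_nsmul_multichoose_eq_ascPochhammer,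
      Polynomial.ascPochhammer_smeval_eq_eval]
  rw [Real.Gamma_add_nat_eq_ascPochhammer_eval_mul hs, ← hfac]
  field_simp [Gamma_ne_zero hs]

theorem Real.hasSum_Gamma_add_nat_div_mul_pow {s x : ℝ} (hs : ∀ m : ℕ, s ≠ -m) (hx : |x| < 1) :
    HasSum (fun n : ℕ => Gamma (s + n) / (Gamma s * n !) * x ^ n) ((1 - x) ^ (-s)) := by
  have h := (Real.one_div_one_sub_rpow_hasFPowerSeriesOnBall_zero s).hasSum
    (y := x) (by simpa [enorm_eq_nnnorm, ← NNReal.coe_lt_coe] using hx)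
  simp only [FormalMultilinearSeries.ofScalars_apply_eq', zero_add, smul_eq_mul] at h
  rw [Real.rpow_neg (by linarith [(abs_lt.mp hx).2]), ← one_div]
  refine h.congr_fun fun n => ?_
  rw [← Ring.multichoose_eq, Real.multichoose_eq_Gamma_div hs]

theorem HasSum.sub_succ_mul_pow {K : Type*} [Field K] [TopologicalSpace K] [IsTopologicalRing K]
    {f : ℕ → K} {x S : K} (h : HasSum (fun k => f k * x ^ (k + 1)) S) (hx : x ≠ 0) :
    HasSum (fun k => (f k - f (k + 1)) * x ^ (k + 1)) (f 0 + (1 - x⁻¹) * S) := by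
  have hshift : HasSum (fun k => f (k + 1) * x ^ (k + 1)) ((S - f 0 * x) / x) := by
    have := ((hasSum_nat_add_iff' 1).mpr h).div_const x
    convert this using 1
    · ext k; field_simp; ring
    · simp
  have hsum : f 0 + (1 - x⁻¹) * S = S - (S - f 0 * x) / x := by field_simp; ring
  rw [hsum]
  simpa only [sub_mul] using h.sub hshift

theorem hasSum_sub_succ_of_antitone {f : ℕ → ℝ} {l : ℝ} (hf : Antitone f)
    (hl : Tendsto f atTop (𝓝 l)) : HasSum (fun k => f k - f (k + 1)) (f 0 - l) := by
  rw [hasSum_iff_tendsto_nat_of_nonneg (fun k => sub_nonneg.mpr (hf k.le_succ))]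
  simp only [Finset.sum_range_sub']
  exact hl.const_sub _

noncomputable def jumpLawTail (α : ℝ) (k : ℕ) : ℝ :=
  Gamma ((k : ℝ) + 2 - α) / (Gamma (2 - α) * (k + 1)!)

section
variable {α : ℝ}

theorem jumpLawTail_zero (hα : α < 2) : jumpLawTail α 0 = 1 := by
  have : Gamma (2 - α) ≠ 0 := (Gamma_pos_of_pos (by linarith)).ne'
  simp [jumpLawTail, this]

theorem jumpLawTail_pos (hα : α < 2) (k : ℕ) : 0 < jumpLawTail α k := by
  unfold jumpLawTail
  have := Gamma_pos_of_pos (show 0 < (k : ℝ) + 2 - α by linarith [k.cast_nonneg (α := ℝ)])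
  have := Gamma_pos_of_pos (show 0 < 2 - α by linarith)
  positivity

theorem jumpLawTail_succ (hα : α < 2) (k : ℕ) :
    jumpLawTail α (k + 1) = ((k : ℝ) + 2 - α) / (k + 2) * jumpLawTail α k := by
  have hk : (k : ℝ) + 2 - α ≠ 0 := by linarith [k.cast_nonneg (α := ℝ)]
  have hΓ : Gamma ((k : ℝ) + 2 - α + 1) = ((k : ℝ) + 2 - α) * Gamma ((k : ℝ) + 2 - α) :=
    Gamma_add_one hk
  simp only [jumpLawTail, Nat.cast_succ, Nat.factorial_succ (k + 1), Nat.cast_mul]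
  rw [show (k : ℝ) + 1 + 2 - α = (k : ℝ) + 2 - α + 1 by ring, hΓ]
  have : Gamma (2 - α) ≠ 0 := (Gamma_pos_of_pos (by linarith)).ne'
  field_simp
  ring

theorem jumpLawTail_sub_succ (hα : α < 2) (k : ℕ) :
    jumpLawTail α k - jumpLawTail α (k + 1)
      = α / Gamma (2 - α) * (Gamma ((k : ℝ) + 2 - α) / (k + 2)!) := by
  rw [jumpLawTail_succ hα]
  simp only [jumpLawTail, Nat.factorial_succ (k + 1), Nat.cast_mul]
  have : Gamma (2 - α) ≠ 0 := (Gamma_pos_of_pos (by linarith)).ne'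
  push_cast
  field_simp
  ring

theorem antitone_jumpLawTail (hα₁ : 1 ≤ α) (hα₂ : α < 2) : Antitone (jumpLawTail α) := by
  refine antitone_nat_of_succ_le fun k => ?_
  rw [jumpLawTail_succ hα₂]
  refine mul_le_of_le_one_left (jumpLawTail_pos hα₂ k).le ?_
  rw [div_le_one (by positivity)]
  linarith

theorem jumpLawTail_le (hα₁ : 1 ≤ α) (hα₂ : α < 2) (k : ℕ) :
    jumpLawTail α k ≤ 1 / (k + 1) := by
  induction k with
  | zero => simp [jumpLawTail_zero hα₂]
  | succ k ih =>
    rw [jumpLawTail_succ hα₂]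
    calc ((k : ℝ) + 2 - α) / (k + 2) * jumpLawTail α k
        ≤ ((k : ℝ) + 1) / (k + 2) * (1 / (k + 1)) := by
          gcongr
          · exact (jumpLawTail_pos hα₂ k).le
          · linarith
      _ = 1 / ((k + 1 : ℕ) + 1) := by push_cast; field_simp; ring

theorem tendsto_jumpLawTail (hα₁ : 1 ≤ α) (hα₂ : α < 2) :
    Tendsto (jumpLawTail α) atTop (𝓝 0) :=
  squeeze_zero (fun k => (jumpLawTail_pos hα₂ k).le) (jumpLawTail_le hα₁ hα₂)
    tendsto_one_div_add_atTop_nhds_zero_nat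

theorem hasSum_jumpLawTail_mul_pow {x : ℝ} (hα₁ : α ≠ 1) (hα₂ : α < 2) (hx : |x| < 1) :
    HasSum (fun k => jumpLawTail α k * x ^ (k + 1)) (((1 - x) ^ (α - 1) - 1) / (1 - α)) := by
  have hα : 1 - α ≠ 0 := sub_ne_zero.mpr hα₁.symm
  have hs : ∀ m : ℕ, 1 - α ≠ -m := by
    rintro (_ | m) h
    · exact hα (by simpa using h)
    · push_cast at h
      linarith [m.cast_nonneg (α := ℝ)]
  have hΓ : Gamma (2 - α) = (1 - α) * Gamma (1 - α) := by
    rw [show 2 - α = 1 - α + 1 by ring]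
    exact Gamma_add_one hα
  have h := ((hasSum_nat_add_iff' 1).mpr (Real.hasSum_Gamma_add_nat_div_mul_pow hs hx)).div_const (1 - α)
  rw [Finset.sum_range_one, neg_sub] at h
  simp only [Nat.cast_zero, add_zero, Nat.factorial_zero, Nat.cast_one, mul_one, pow_zero,
    div_self (Gamma_ne_zero hs)] at h
  refine h.congr_fun fun k => ?_
  simp only [jumpLawTail, hΓ]
  push_cast
  rw [show (k : ℝ) + 2 - α = 1 - α + (k + 1) by ring]
  field_simp

end

/-- the Laplace transform of the law `ℙ(X = k) = (α/Γ(2-α)) Γ(k+1-α)/(k+1)!`,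
`k ≥ 1`, is `φ(u) = 1 + ((e^u - 1)/(α-1))((1 - e^{-u})^{α-1} - 1)` for `u ≥ 0`. -/
theorem limit_jump_law_laplace_transform
    (α : ℝ) (hα₁ : 1 < α) (hα₂ : α < 2) :
    ∀ u : ℝ, 0 ≤ u →
      (∑' k : ℕ, Real.exp (-u * ((k : ℝ) + 1)) *
        (α / Real.Gamma (2 - α) *
          (Real.Gamma (((k : ℝ) + 1) + 1 - α) / ((k + 2).factorial : ℝ))))
      = 1 + (Real.exp u - 1) / (α - 1) * ((1 - Real.exp (-u)) ^ (α - 1) - 1) := by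
  intro u hu
  have hterm : ∀ k : ℕ, Real.exp (-u * ((k : ℝ) + 1)) *
      (α / Real.Gamma (2 - α) * (Real.Gamma (((k : ℝ) + 1) + 1 - α) / ((k + 2).factorial : ℝ)))
      = (jumpLawTail α k - jumpLawTail α (k + 1)) * Real.exp (-u) ^ (k + 1) := by
    intro k
    rw [jumpLawTail_sub_succ hα₂, ← Real.exp_nat_mul, show ((k : ℝ) + 1) + 1 - α = k + 2 - α by ring]
    push_cast
    ring_nf
  rw [tsum_congr hterm]
  rcases hu.eq_or_lt with rfl | hu
  · have h := hasSum_sub_succ_of_antitone (antitone_jumpLawTail hα₁.le hα₂)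
      (tendsto_jumpLawTail hα₁.le hα₂)
    simpa [jumpLawTail_zero hα₂] using h.tsum_eq
  · have hx : |Real.exp (-u)| < 1 := by
      rw [abs_of_pos (Real.exp_pos _)]
      exact Real.exp_lt_one_iff.mpr (by linarith)
    rw [((hasSum_jumpLawTail_mul_pow hα₁.ne' hα₂ hx).sub_succ_mul_pow (Real.exp_pos _).ne').tsum_eq,
      jumpLawTail_zero hα₂, Real.exp_neg, inv_inv]
    generalize (1 - (Real.exp u)⁻¹) ^ (α - 1) = P
    have : α - 1 ≠ 0 := by linarith
    have : 1 - α ≠ 0 := by linarith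
    field_simp
    ring
end

section
/- There exists a finite constant C such that for all n ≥ 2 and all t ≥ 0, E[(L_t^{(n)} − L̃_t^{(n)})²] ≤ C n^{3−2α} if α < 3/2, E[(L_t^{(n)} − L̃_t^{(n)})²] ≤ C log(n) if α = 3/2, and E[(L_t^{(n)} − L̃_t^{(n)})²] ≤ C if α > 3/2. -/
open MeasureTheory ProbabilityTheory Filter Real Topology

/-!
Given the chain `Y`, the difference `L − L̃ = ∑_{k ≤ ⌊nt⌋ ∧ (τ−1)} (Y_k / g_{Y_k}) (E_k − 1)` is
a sum of uncorrelated centred terms, and `E_k − 1` has unit variance, so its second moment is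
`E ∑_k (Y_k / g_{Y_k})²`. Until absorption the chain strictly decreases from `n`, hence visits each
state `b ∈ [2, n]` at most once, and the second moment is at most `∑_{b=2}^n (b / g_b)²`.
Since `ρ(t) ~ C₀ t^{−α}` and `g_b ≥ ∫_{(1/b,1)} x^{−2} Λ(dx) / 13 ≥ (ρ(1/b) − Λ{1}) / 13`, one has
`g_b ≥ a b^α` for some `a > 0`. This leaves `a^{−2} ∑_{b=2}^n b^{2−2α}`, which is `O(n^{3−2α})`,
`O(log n)` or `O(1)` according as `α < 3/2`, `α = 3/2` or `α > 3/2`.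
-/

open Set

theorem sum_Icc_two_le_integral {f : ℝ → ℝ} {n : ℕ} (hn : 1 ≤ n)
    (hf : AntitoneOn f (Icc 1 n)) :
    ∑ b ∈ Finset.Icc 2 n, f b ≤ ∫ x in (1 : ℝ)..n, f x := by
  have hcast : ((n - 1 : ℕ) : ℝ) = n - 1 := by push_cast [hn]; ring
  have key := AntitoneOn.sum_le_integral (x₀ := 1) (a := n - 1) (by rwa [hcast, add_sub_cancel])
  rw [hcast, add_sub_cancel] at key
  refine le_of_eq_of_le ?_ key
  rw [← Finset.Ico_add_one_right_eq_Icc, Finset.sum_Ico_eq_sum_range,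
    show n + 1 - 2 = n - 1 by omega]
  refine Finset.sum_congr rfl fun i _ => ?_
  push_cast; ring_nf

theorem sum_Icc_two_rpow_le {q : ℝ} (hq₁ : -1 < q) (hq₀ : q ≤ 0) {n : ℕ} (hn : 1 ≤ n) :
    ∑ b ∈ Finset.Icc 2 n, (b : ℝ) ^ q ≤ (n : ℝ) ^ (q + 1) / (q + 1) := by
  have hanti : AntitoneOn (fun x : ℝ => x ^ q) (Icc 1 n) := fun x hx y _ hxy =>
    Real.rpow_le_rpow_of_nonpos (by linarith [hx.1]) hxy hq₀
  calc ∑ b ∈ Finset.Icc 2 n, (b : ℝ) ^ q ≤ ∫ x in (1 : ℝ)..n, x ^ q :=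
        sum_Icc_two_le_integral hn hanti
    _ = ((n : ℝ) ^ (q + 1) - 1) / (q + 1) := by rw [integral_rpow (Or.inl hq₁), Real.one_rpow]
    _ ≤ (n : ℝ) ^ (q + 1) / (q + 1) := by gcongr; linarith; linarith

theorem sum_Icc_two_inv_le_log {n : ℕ} (hn : 1 ≤ n) :
    ∑ b ∈ Finset.Icc 2 n, (b : ℝ)⁻¹ ≤ Real.log n := by
  have hanti : AntitoneOn (fun x : ℝ => x⁻¹) (Icc 1 n) := fun x hx y _ hxy =>
    inv_anti₀ (by linarith [hx.1]) hxy
  have hn' : (0 : ℝ) < n := by exact_mod_cast hn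
  calc ∑ b ∈ Finset.Icc 2 n, (b : ℝ)⁻¹ ≤ ∫ x in (1 : ℝ)..n, x⁻¹ :=
        sum_Icc_two_le_integral hn hanti
    _ = Real.log n := by rw [integral_inv_of_pos one_pos hn', div_one]

theorem integral_exp_neg_mul_pow (m : ℕ) :
    ∫ t in Ioi (0 : ℝ), Real.exp (-t) * t ^ m = m.factorial := by
  rw [← Real.Gamma_nat_eq_factorial, Real.Gamma_eq_integral (by positivity)]
  refine setIntegral_congr_fun measurableSet_Ioi fun t _ => ?_
  simp [← Real.rpow_natCast]

theorem integrableOn_exp_neg_mul_pow (m : ℕ) :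
    IntegrableOn (fun t : ℝ => Real.exp (-t) * t ^ m) (Ioi 0) := by
  refine (Real.GammaIntegral_convergent (s := m + 1) (by positivity)).congr_fun (fun t _ => ?_)
    measurableSet_Ioi
  simp [← Real.rpow_natCast]

structure IsStdExponential {Ω : Type*} [MeasurableSpace Ω] (μ : Measure Ω) (X : Ω → ℝ) :
    Prop where
  measurable : Measurable X
  tail : ∀ s : ℝ, 0 ≤ s → μ {ω | s < X ω} = ENNReal.ofReal (Real.exp (-s))

namespace IsStdExponential

variable {Ω : Type*} [MeasurableSpace Ω] {μ : Measure Ω} [IsProbabilityMeasure μ] {X : Ω → ℝ}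

theorem ae_nonneg (hX : IsStdExponential μ X) : 0 ≤ᵐ[μ] X := by
  have hpos : μ {ω | 0 < X ω} = 1 := by simpa using hX.tail 0 le_rfl
  filter_upwards [(prob_compl_eq_zero_iff
    (measurableSet_lt measurable_const hX.measurable)).2 hpos] with ω hω
  exact le_of_lt hω

theorem lintegral_ofReal_pow (hX : IsStdExponential μ X) (m : ℕ) :
    ∫⁻ ω, ENNReal.ofReal (X ω ^ (m + 1)) ∂μ = ENNReal.ofReal ((m + 1).factorial : ℕ) := by
  have hg_nn : ∀ᵐ t ∂volume.restrict (Ioi (0 : ℝ)), 0 ≤ (m + 1 : ℝ) * t ^ m := by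
    filter_upwards [ae_restrict_mem measurableSet_Ioi] with t (ht : 0 < t)
    positivity
  have hg_int : ∀ t > (0 : ℝ), IntervalIntegrable (fun t : ℝ => (m + 1 : ℝ) * t ^ m) volume 0 t :=
    fun t _ => (by fun_prop : Continuous fun t : ℝ => (m + 1 : ℝ) * t ^ m).intervalIntegrable _ _
  have layer := lintegral_comp_eq_lintegral_meas_lt_mul μ hX.ae_nonneg
    hX.measurable.aemeasurable hg_int hg_nn
  have hprim : ∀ x : ℝ, ∫ t in (0 : ℝ)..x, (m + 1 : ℝ) * t ^ m = x ^ (m + 1) := fun x => by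
    rw [intervalIntegral.integral_const_mul, integral_pow]; field_simp; simp
  simp only [hprim] at layer
  have hgamma : ∫ t in Ioi (0 : ℝ), Real.exp (-t) * ((m + 1 : ℝ) * t ^ m)
      = ((m + 1).factorial : ℕ) := by
    simp_rw [mul_left_comm (Real.exp _), integral_const_mul, integral_exp_neg_mul_pow]
    push_cast [Nat.factorial_succ]; ring
  rw [layer, ← hgamma, ofReal_integral_eq_lintegral_ofReal]
  · refine setLIntegral_congr_fun measurableSet_Ioi fun t (ht : 0 < t) => ?_
    rw [hX.tail t ht.le, ENNReal.ofReal_mul (Real.exp_pos _).le]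
  · simpa only [mul_left_comm (Real.exp _)] using
      (integrableOn_exp_neg_mul_pow m).const_mul (m + 1 : ℝ)
  · filter_upwards [ae_restrict_mem measurableSet_Ioi] with t (ht : 0 < t)
    positivity

theorem integrable_pow (hX : IsStdExponential μ X) (m : ℕ) :
    Integrable (fun ω => X ω ^ (m + 1)) μ := by
  refine ⟨(hX.measurable.pow_const _).aestronglyMeasurable, ?_⟩
  rw [hasFiniteIntegral_iff_ofReal]
  · simp [hX.lintegral_ofReal_pow m]
  · filter_upwards [hX.ae_nonneg] with ω hω using pow_nonneg hω _

theorem integral_pow (hX : IsStdExponential μ X) (m : ℕ) :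
    ∫ ω, X ω ^ (m + 1) ∂μ = (m + 1).factorial := by
  rw [integral_eq_lintegral_of_nonneg_ae, hX.lintegral_ofReal_pow m]
  · simp
  · filter_upwards [hX.ae_nonneg] with ω hω using pow_nonneg hω _
  · exact (hX.measurable.pow_const _).aestronglyMeasurable

theorem memLp_two (hX : IsStdExponential μ X) : MemLp X 2 μ :=
  (memLp_two_iff_integrable_sq hX.measurable.aestronglyMeasurable).2 (hX.integrable_pow 1)

theorem integral_eq_one (hX : IsStdExponential μ X) : ∫ ω, X ω ∂μ = 1 := by
  simpa using hX.integral_pow 0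

theorem integral_sub_one (hX : IsStdExponential μ X) : ∫ ω, (X ω - 1) ∂μ = 0 := by
  rw [integral_sub (hX.memLp_two.integrable one_le_two) (integrable_const 1), hX.integral_eq_one]
  simp

theorem integral_sub_one_sq (hX : IsStdExponential μ X) : ∫ ω, (X ω - 1) ^ 2 ∂μ = 1 := by
  have hvar := variance_eq_sub hX.memLp_two
  rw [variance_eq_integral hX.measurable.aemeasurable, hX.integral_eq_one] at hvar
  simp only [Pi.pow_apply, hX.integral_pow 1] at hvar
  rw [hvar]; norm_num

end IsStdExponential

section Orthogonality

variable {Ω ι : Type*} [MeasurableSpace Ω] {μ : Measure Ω}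

theorem integral_sq_finsetSum_of_orthogonal {s : Finset ι} {X : ι → Ω → ℝ}
    (hint : ∀ i j, Integrable (fun ω => X i ω * X j ω) μ)
    (horth : ∀ i j, i ≠ j → ∫ ω, X i ω * X j ω ∂μ = 0) :
    ∫ ω, (∑ i ∈ s, X i ω) ^ 2 ∂μ = ∑ i ∈ s, ∫ ω, X i ω ^ 2 ∂μ := by
  simp_rw [sq, Finset.sum_mul_sum]
  rw [integral_finsetSum _ fun i _ => integrable_finsetSum _ fun j _ => hint i j]
  refine Finset.sum_congr rfl fun i hi => ?_
  rw [integral_finsetSum _ fun j _ => hint i j]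
  exact Finset.sum_eq_single_of_mem i hi fun j _ hji => horth i j hji.symm

theorem integral_sq_finsetSum_mul_of_indepFun [IsFiniteMeasure μ] {s : Finset ι}
    {A B : ι → Ω → ℝ} {M : ℝ} (hA : ∀ i, AEStronglyMeasurable (A i) μ)
    (hAbdd : ∀ i ω, |A i ω| ≤ M) (hB : ∀ i, MemLp (B i) 2 μ)
    (hindep : ∀ i j, IndepFun (fun ω => A i ω * A j ω) (fun ω => B i ω * B j ω) μ)
    (horth : ∀ i j, i ≠ j → ∫ ω, B i ω * B j ω ∂μ = 0) :
    ∫ ω, (∑ i ∈ s, A i ω * B i ω) ^ 2 ∂μ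
      = ∑ i ∈ s, (∫ ω, A i ω ^ 2 ∂μ) * ∫ ω, B i ω ^ 2 ∂μ := by
  have hfactor : ∀ i j, ∫ ω, A i ω * B i ω * (A j ω * B j ω) ∂μ
      = (∫ ω, A i ω * A j ω ∂μ) * ∫ ω, B i ω * B j ω ∂μ := fun i j => by
    rw [← (hindep i j).integral_fun_mul_eq_mul_integral ((hA i).mul (hA j))
      ((hB i).aestronglyMeasurable.mul (hB j).aestronglyMeasurable)]
    congr 1 with ω; ring
  have hint : ∀ i j, Integrable (fun ω => A i ω * B i ω * (A j ω * B j ω)) μ := fun i j => by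
    have := ((hB i).integrable_mul (hB j)).bdd_mul ((hA i).mul (hA j)) (c := M * M)
      (Eventually.of_forall fun ω => by
        rw [Real.norm_eq_abs, Pi.mul_apply, abs_mul]
        exact mul_le_mul (hAbdd i ω) (hAbdd j ω) (abs_nonneg _) ((abs_nonneg _).trans (hAbdd i ω)))
    exact this.congr (Eventually.of_forall fun ω => by simp only [Pi.mul_apply]; ring)
  rw [integral_sq_finsetSum_of_orthogonal hint fun i j hij => by
    rw [hfactor, horth i j hij, mul_zero]]
  refine Finset.sum_congr rfl fun i _ => ?_
  simpa only [sq, mul_mul_mul_comm] using hfactor i i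

end Orthogonality

theorem coalRate_nonneg (Λ : Measure ℝ) (b k : ℕ) : 0 ≤ coalRate Λ b k :=
  setIntegral_nonneg measurableSet_Ioo fun _ hx => by
    have := hx.2.le; have := hx.1.le
    positivity

theorem coalG_one (Λ : Measure ℝ) : coalG Λ 1 = 0 := by
  simp [coalG]

theorem sq_mul_sum_choose_eq (b : ℕ) (hb : 2 ≤ b) (x : ℝ) :
    x ^ 2 * ∑ ℓ ∈ Finset.Icc 1 (b - 1),
        (b.choose (ℓ + 1) : ℝ) * (x ^ (ℓ + 1 - 2) * (1 - x) ^ (b - (ℓ + 1)))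
      = 1 - (1 - x) ^ b - b * x * (1 - x) ^ (b - 1) := by
  have hshift : x ^ 2 * ∑ ℓ ∈ Finset.Icc 1 (b - 1),
        (b.choose (ℓ + 1) : ℝ) * (x ^ (ℓ + 1 - 2) * (1 - x) ^ (b - (ℓ + 1)))
      = ∑ k ∈ Finset.Icc 2 b, x ^ k * (1 - x) ^ (b - k) * b.choose k := by
    rw [Finset.mul_sum]
    refine Finset.sum_nbij' (· + 1) (· - 1) (by intro; simp; omega) (by intro; simp; omega)
      (by simp) (by intro; simp; omega) fun ℓ hℓ => ?_
    obtain ⟨h1, -⟩ := Finset.mem_Icc.1 hℓ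
    rw [show ℓ + 1 = 2 + (ℓ + 1 - 2) by omega, pow_add]
    simp only [show 2 + (ℓ + 1 - 2) - 2 = ℓ + 1 - 2 by omega]
    ring
  have hrange : Finset.range (b + 1) = insert 0 (insert 1 (Finset.Icc 2 b)) := by
    ext j; simp; omega
  have hbinom := add_pow x (1 - x) b
  rw [add_sub_cancel, one_pow, hrange, Finset.sum_insert (by simp),
    Finset.sum_insert (by simp)] at hbinom
  simp only [pow_zero, pow_one, Nat.choose_zero_right, Nat.choose_one_right, Nat.sub_zero,
    Nat.cast_one, one_mul, mul_one] at hbinom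
  rw [hshift]
  linarith

theorem one_sub_pow_add_mul_le {b : ℕ} (hb : 2 ≤ b) {x : ℝ} (hx₀ : (b : ℝ)⁻¹ < x) (hx₁ : x < 1) :
    (1 - x) ^ b + b * x * (1 - x) ^ (b - 1) ≤ 12 / 13 := by
  obtain ⟨m, rfl⟩ : ∃ m, b = m + 1 := ⟨b - 1, by omega⟩
  simp only [Nat.add_sub_cancel]
  push_cast at hx₀ ⊢
  have hu : 1 / 2 ≤ m * x := by
    have : 1 < (m + 1) * x := by rwa [inv_lt_iff_one_lt_mul₀ (by positivity), mul_comm] at hx₀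
    have : (1 : ℝ) ≤ m := by exact_mod_cast (show 1 ≤ m by omega)
    nlinarith
  have hexp : (1 - x) ^ m ≤ Real.exp (-(m * x)) := by
    rw [neg_mul_eq_mul_neg, Real.exp_nat_mul]
    exact pow_le_pow_left₀ (by linarith) (by linarith [Real.add_one_le_exp (-x)]) _
  -- with `u = m x ≥ 1/2`: `e^{-u} (1 + u) ≤ (1 + u) / (1 + u + u²/2) ≤ 12/13`
  have hquad := Real.quadratic_le_exp_of_nonneg (show 0 ≤ m * x by linarith)
  have hdecay : Real.exp (-(m * x)) * (1 + m * x) ≤ 12 / 13 := by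
    rw [Real.exp_neg, inv_mul_le_iff₀ (Real.exp_pos _)]
    nlinarith
  calc (1 - x) ^ (m + 1) + (m + 1) * x * (1 - x) ^ m = (1 - x) ^ m * (1 + m * x) := by ring
    _ ≤ Real.exp (-(m * x)) * (1 + m * x) := by gcongr
    _ ≤ 12 / 13 := hdecay

theorem one_div_thirteen_mul_zpow_le_sum_choose {b : ℕ} (hb : 2 ≤ b) {x : ℝ} (hx₀ : (b : ℝ)⁻¹ < x)
    (hx₁ : x < 1) :
    1 / 13 * x ^ (-2 : ℤ) ≤ ∑ ℓ ∈ Finset.Icc 1 (b - 1),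
        (b.choose (ℓ + 1) : ℝ) * (x ^ (ℓ + 1 - 2) * (1 - x) ^ (b - (ℓ + 1))) := by
  have hx : 0 < x := (inv_pos.2 (by positivity)).trans hx₀
  rw [zpow_neg, zpow_ofNat, ← div_eq_mul_inv, div_le_iff₀ (by positivity), mul_comm,
    sq_mul_sum_choose_eq b hb x]
  linarith [one_sub_pow_add_mul_le hb hx₀ hx₁]

theorem integrableOn_zpow_neg_two_Icc (Λ : Measure ℝ) [IsFiniteMeasure Λ] {t : ℝ} (ht : 0 < t) :
    IntegrableOn (fun x : ℝ => x ^ (-2 : ℤ)) (Icc t 1) Λ :=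
  ((continuousOn_zpow₀ (-2)).mono fun _ hx => ne_of_gt (ht.trans_le hx.1)).integrableOn_Icc

theorem setIntegral_Ioo_zpow_le_coalG (Λ : Measure ℝ) [IsFiniteMeasure Λ] {b : ℕ} (hb : 2 ≤ b) :
    1 / 13 * ∫ x in Ioo (b : ℝ)⁻¹ 1, x ^ (-2 : ℤ) ∂Λ ≤ coalG Λ b := by
  have hint : ∀ ℓ : ℕ, IntegrableOn (fun x : ℝ =>
      (b.choose (ℓ + 1) : ℝ) * (x ^ (ℓ + 1 - 2) * (1 - x) ^ (b - (ℓ + 1)))) (Ioo 0 1) Λ :=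
    fun ℓ => ((by fun_prop : Continuous fun x : ℝ =>
      (b.choose (ℓ + 1) : ℝ) * (x ^ (ℓ + 1 - 2) * (1 - x) ^ (b - (ℓ + 1)))).integrableOn_Icc
      ).mono_set Ioo_subset_Icc_self
  have hsub : Ioo (b : ℝ)⁻¹ 1 ⊆ Ioo 0 1 := Ioo_subset_Ioo_left (by positivity)
  calc 1 / 13 * ∫ x in Ioo (b : ℝ)⁻¹ 1, x ^ (-2 : ℤ) ∂Λ
      ≤ ∫ x in Ioo (b : ℝ)⁻¹ 1, ∑ ℓ ∈ Finset.Icc 1 (b - 1),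
          (b.choose (ℓ + 1) : ℝ) * (x ^ (ℓ + 1 - 2) * (1 - x) ^ (b - (ℓ + 1))) ∂Λ := by
        rw [← integral_const_mul]
        refine setIntegral_mono_on (((integrableOn_zpow_neg_two_Icc Λ (by positivity)).mono_set
          Ioo_subset_Icc_self).const_mul _)
          (integrable_finsetSum _ fun ℓ _ => (hint ℓ).mono_set hsub)
          measurableSet_Ioo fun x hx => one_div_thirteen_mul_zpow_le_sum_choose hb hx.1 hx.2
    _ ≤ ∫ x in Ioo 0 1, ∑ ℓ ∈ Finset.Icc 1 (b - 1),
          (b.choose (ℓ + 1) : ℝ) * (x ^ (ℓ + 1 - 2) * (1 - x) ^ (b - (ℓ + 1))) ∂Λ := by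
        refine setIntegral_mono_set (integrable_finsetSum _ fun ℓ _ => hint ℓ) ?_
          hsub.eventuallyLE
        filter_upwards [ae_restrict_mem measurableSet_Ioo] with x hx
        have := hx.2.le; have := hx.1.le
        positivity
    _ = coalG Λ b := by
        rw [integral_finsetSum _ fun ℓ _ => hint ℓ]
        simp only [integral_const_mul, coalG, coalRate]

theorem coalRho_eq_setIntegral_Ioo_add (Λ : Measure ℝ) [IsFiniteMeasure Λ] {t : ℝ} (ht₀ : 0 < t)
    (ht₁ : t < 1) :
    coalRho Λ t = ∫ x in Ioo t 1, x ^ (-2 : ℤ) ∂Λ + Λ.real {1} := by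
  have hint := integrableOn_zpow_neg_two_Icc Λ ht₀
  rw [coalRho, ← Ioo_union_right ht₁, setIntegral_union (by simp) (measurableSet_singleton 1)
    (hint.mono_set Ioo_subset_Icc_self) (hint.mono_set (by simp [ht₁.le])), integral_singleton]
  simp

theorem exists_pos_forall_mul_le_of_eventually {f w : ℕ → ℝ} {m : ℕ} {c : ℝ} (hc : 0 < c)
    (hw : ∀ b, 0 ≤ w b) (hf : ∀ b, m ≤ b → 0 < f b) (hev : ∀ᶠ b in atTop, c * w b ≤ f b) :
    ∃ a, 0 < a ∧ ∀ b, m ≤ b → a * w b ≤ f b := by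
  obtain ⟨N, hN⟩ := eventually_atTop.1 hev
  have hsmall : ∀ b ∈ Finset.range N, ∀ᶠ a in 𝓝[>] (0 : ℝ), m ≤ b → a * w b ≤ f b := by
    intro b _
    by_cases hb : m ≤ b
    · have hlim : Tendsto (fun a : ℝ => a * w b) (𝓝[>] 0) (𝓝 0) := by
        simpa using
          (tendsto_nhdsWithin_of_tendsto_nhds (tendsto_id (x := 𝓝 (0 : ℝ)))).mul_const (w b)
      filter_upwards [hlim.eventually_le_const (hf b hb)] with a ha _ using ha
    · exact Eventually.of_forall fun _ h => absurd h hb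
  obtain ⟨a, ⟨hac, ha⟩, hpos⟩ := (((eventually_le_nhds hc).filter_mono nhdsWithin_le_nhds).and
    ((Finset.eventually_all _).2 hsmall)).and self_mem_nhdsWithin |>.exists
  refine ⟨a, hpos, fun b hb => ?_⟩
  rcases lt_or_ge b N with hbN | hbN
  · exact ha b (Finset.mem_range.2 hbN) hb
  · exact (mul_le_mul_of_nonneg_right hac (hw b)).trans (hN b hbN)

theorem eventually_mul_rpow_le_coalG (Λ : Measure ℝ) [IsFiniteMeasure Λ] {C₀ α ζ : ℝ}
    (hα : 0 < α) (hζ : 0 < ζ) (hC₀ : 0 < C₀) (hρ : RhoBound Λ C₀ α ζ) :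
    ∀ᶠ b : ℕ in atTop, C₀ / 26 * (b : ℝ) ^ α ≤ coalG Λ b := by
  obtain ⟨C, hC⟩ := hρ
  set T := Λ.real {1}
  have hlim : Tendsto (fun b : ℕ => C₀ - C * (b : ℝ) ^ (-ζ) - T * (b : ℝ) ^ (-α)) atTop
      (𝓝 (C₀ - C * 0 - T * 0)) :=
    (((tendsto_rpow_neg_atTop hζ).comp tendsto_natCast_atTop_atTop).const_mul C).const_sub C₀
      |>.sub (((tendsto_rpow_neg_atTop hα).comp tendsto_natCast_atTop_atTop).const_mul T)
  simp only [mul_zero, sub_zero] at hlim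
  filter_upwards [hlim.eventually_const_le (half_lt_self hC₀), eventually_ge_atTop 2]
    with b hlow hb
  have hb' : (2 : ℝ) ≤ b := by exact_mod_cast hb
  have hinv : (b : ℝ)⁻¹ < 1 := inv_lt_one_of_one_lt₀ (by linarith)
  have hρb := (abs_le.1 (hC (b : ℝ)⁻¹ ⟨by positivity, hinv.le⟩)).1
  have hpow : ∀ s : ℝ, ((b : ℝ)⁻¹) ^ s = (b : ℝ) ^ (-s) := fun s => by
    rw [Real.inv_rpow (by positivity), Real.rpow_neg (by positivity)]
  rw [hpow, hpow, neg_neg, neg_sub, Real.rpow_sub (by positivity)] at hρb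
  have hdecomp : C₀ * (b : ℝ) ^ α - C * ((b : ℝ) ^ α / (b : ℝ) ^ ζ) - T
      = (b : ℝ) ^ α * (C₀ - C * (b : ℝ) ^ (-ζ) - T * (b : ℝ) ^ (-α)) := by
    rw [Real.rpow_neg (by positivity), Real.rpow_neg (by positivity)]
    field_simp
  calc C₀ / 26 * (b : ℝ) ^ α = 1 / 13 * ((b : ℝ) ^ α * (C₀ / 2)) := by ring
    _ ≤ 1 / 13 * ((b : ℝ) ^ α * (C₀ - C * (b : ℝ) ^ (-ζ) - T * (b : ℝ) ^ (-α))) := by gcongr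
    _ ≤ 1 / 13 * (coalRho Λ (b : ℝ)⁻¹ - T) := by rw [← hdecomp]; gcongr; linarith
    _ ≤ 1 / 13 * ∫ x in Ioo (b : ℝ)⁻¹ 1, x ^ (-2 : ℤ) ∂Λ := by
        gcongr
        linarith [coalRho_eq_setIntegral_Ioo_add Λ (by positivity : (0 : ℝ) < (b : ℝ)⁻¹) hinv]
    _ ≤ coalG Λ b := setIntegral_Ioo_zpow_le_coalG Λ hb

theorem exists_pos_mul_rpow_le_coalG (Λ : Measure ℝ) [IsFiniteMeasure Λ] {C₀ α ζ : ℝ}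
    (hα : 0 < α) (hζ : 0 < ζ) (hC₀ : 0 < C₀) (hρ : RhoBound Λ C₀ α ζ)
    (hg : ∀ b : ℕ, 2 ≤ b → 0 < coalG Λ b) :
    ∃ a, 0 < a ∧ ∀ b : ℕ, 2 ≤ b → a * (b : ℝ) ^ α ≤ coalG Λ b :=
  exists_pos_forall_mul_le_of_eventually (by positivity) (fun _ => by positivity) hg
    (eventually_mul_rpow_le_coalG Λ hα hζ hC₀ hρ)

structure IsDescentPath (y : ℕ → ℕ) : Prop where
  one_le : ∀ k, 1 ≤ y k
  succ_le : ∀ k, y (k + 1) ≤ y k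
  succ_lt : ∀ k, 2 ≤ y k → y (k + 1) < y k

namespace IsDescentPath

variable {y : ℕ → ℕ}

theorem antitone (hy : IsDescentPath y) : Antitone y := antitone_nat_of_succ_le hy.succ_le

theorem exists_eq_one (hy : IsDescentPath y) : ∃ k, y k = 1 := by
  by_contra! hne
  have hdesc : ∀ k, y k + k ≤ y 0 := by
    intro k
    induction k with
    | zero => simp
    | succ k ih => have := hy.succ_lt k (by have := hy.one_le k; have := hne k; omega); omega
  have := hdesc (y 0 + 1)
  omega

theorem eq_one_of_sInf_le (hy : IsDescentPath y) {k : ℕ} (hk : sInf {j | y j = 1} ≤ k) :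
    y k = 1 :=
  le_antisymm ((hy.antitone hk).trans_eq (Nat.sInf_mem hy.exists_eq_one)) (hy.one_le k)

theorem sum_range_min_sInf_eq (hy : IsDescentPath y) (hy₀ : 2 ≤ y 0) (F : ℕ → ℕ → ℝ)
    (hF : ∀ k, F k 1 = 0) (N : ℕ) :
    ∑ k ∈ Finset.range (min N (sInf {j | y j = 1} - 1) + 1), F k (y k)
      = ∑ k ∈ Finset.range (N + 1), F k (y k) := by
  have hpos : 0 < sInf {j | y j = 1} :=
    Nat.pos_of_ne_zero fun h => by have := hy.eq_one_of_sInf_le h.le; omega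
  refine Finset.sum_subset (Finset.range_subset_range.2 (by omega)) fun k hk hk' => ?_
  simp only [Finset.mem_range] at hk hk'
  rw [hy.eq_one_of_sInf_le (by omega), hF]

theorem sum_range_le_sum_Icc (hy : IsDescentPath y) {h : ℕ → ℝ} (hh : ∀ b, 0 ≤ h b)
    (h₁ : h 1 = 0) (m : ℕ) :
    ∑ k ∈ Finset.range m, h (y k) ≤ ∑ b ∈ Finset.Icc 2 (y 0), h b := by
  have hinj : Set.InjOn y {k | 2 ≤ y k} := by
    intro j hj k hk hjk
    by_contra hne
    rcases Nat.lt_or_gt_of_ne hne with hlt | hlt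
    · have := hy.succ_lt j hj; have := hy.antitone (show j + 1 ≤ k by omega); omega
    · have := hy.succ_lt k hk; have := hy.antitone (show k + 1 ≤ j by omega); omega
  calc ∑ k ∈ Finset.range m, h (y k)
      = ∑ k ∈ (Finset.range m).filter (fun k => 2 ≤ y k), h (y k) := by
        refine (Finset.sum_filter_of_ne fun k _ hk => ?_).symm
        by_contra hlt
        exact hk (by rw [show y k = 1 by have := hy.one_le k; omega, h₁])
    _ = ∑ b ∈ ((Finset.range m).filter (fun k => 2 ≤ y k)).image y, h b :=
        (Finset.sum_image fun j hj k hk => hinj (Finset.mem_filter.1 hj).2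
          (Finset.mem_filter.1 hk).2).symm
    _ ≤ ∑ b ∈ Finset.Icc 2 (y 0), h b := by
        refine Finset.sum_le_sum_of_subset_of_nonneg (fun b hb => ?_) fun b _ _ => hh b
        obtain ⟨k, hk, rfl⟩ := Finset.mem_image.1 hb
        exact Finset.mem_Icc.2 ⟨(Finset.mem_filter.1 hk).2, hy.antitone k.zero_le⟩

end IsDescentPath

theorem sum_ofReal_transition_eq_one (Λ : Measure ℝ) {b : ℕ} (hg : 0 < coalG Λ b) :
    ∑ ℓ ∈ Finset.Icc 1 (b - 1),
      ENNReal.ofReal ((b.choose (ℓ + 1) : ℝ) * coalRate Λ b (ℓ + 1) / coalG Λ b) = 1 := by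
  rw [← ENNReal.ofReal_sum_of_nonneg fun ℓ _ => div_nonneg
    (mul_nonneg (Nat.cast_nonneg _) (coalRate_nonneg Λ b _)) hg.le, ← Finset.sum_div]
  rw [show ∑ ℓ ∈ Finset.Icc 1 (b - 1), (b.choose (ℓ + 1) : ℝ) * coalRate Λ b (ℓ + 1)
    = coalG Λ b from rfl, div_self hg.ne', ENNReal.ofReal_one]

namespace IsCoalChain

variable {Λ : Measure ℝ} {Ω : Type*} [MeasurableSpace Ω] {μ : Measure Ω} [IsFiniteMeasure μ]
  {Y : ℕ → Ω → ℕ} {n : ℕ}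

theorem measure_cylinder_not_lt (hY : IsCoalChain Λ μ Y n)
    (hg : ∀ b : ℕ, 2 ≤ b → 0 < coalG Λ b) (k : ℕ) (y : ℕ → ℕ) :
    μ {ω | (∀ j ≤ k, Y j ω = y j) ∧ 2 ≤ Y k ω ∧ Y k ω ≤ Y (k + 1) ω} = 0 := by
  obtain ⟨hmeas, -, -, -, htrans⟩ := hY
  set cyl := {ω | ∀ j ≤ k, Y j ω = y j}
  by_cases hb : 2 ≤ y k
  swap
  · refine measure_mono_null (fun ω hω => ?_) measure_empty
    exact hb (hω.1 k le_rfl ▸ hω.2.1)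
  have hcyl : MeasurableSet cyl := by measurability
  -- the transitions out of `y k` have total probability one
  let S : ℕ → Set Ω := fun ℓ => {ω | (∀ j ≤ k, Y j ω = y j) ∧ Y (k + 1) ω = y k - ℓ}
  have hS : ∀ ℓ, MeasurableSet (S ℓ) := fun ℓ =>
    hcyl.inter (hmeas (k + 1) (measurableSet_singleton _))
  have hdisj : (Finset.Icc 1 (y k - 1) : Set ℕ).PairwiseDisjoint S := by
    intro ℓ hℓ ℓ' hℓ' hne
    simp only [Finset.coe_Icc, Set.mem_Icc] at hℓ hℓ'
    exact Set.disjoint_left.2 fun ω h h' => hne (by have := h.2; have := h'.2; omega)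
  have hunion : μ (⋃ ℓ ∈ Finset.Icc 1 (y k - 1), S ℓ) = μ cyl := by
    rw [measure_biUnion_finset hdisj fun ℓ _ => hS ℓ,
      Finset.sum_congr rfl fun ℓ hℓ => htrans k y (y k) ℓ hb (Finset.mem_Icc.1 hℓ).1
        (Finset.mem_Icc.1 hℓ).2 rfl, ← Finset.sum_mul, sum_ofReal_transition_eq_one Λ (hg _ hb),
      one_mul]
  refine measure_mono_null (t := cyl \ ⋃ ℓ ∈ Finset.Icc 1 (y k - 1), S ℓ) ?_ ?_
  · rintro ω ⟨hcylω, h2, hle⟩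
    refine ⟨hcylω, fun hmem => ?_⟩
    obtain ⟨ℓ, hℓ, hω⟩ := Set.mem_iUnion₂.1 hmem
    have := hω.2; have := (Finset.mem_Icc.1 hℓ).1; have := hcylω k le_rfl
    omega
  · have hsub : ⋃ ℓ ∈ Finset.Icc 1 (y k - 1), S ℓ ⊆ cyl := Set.iUnion₂_subset fun ℓ _ ω hω => hω.1
    rw [measure_sdiff hsub
      (Finset.measurableSet_biUnion _ fun ℓ _ => hS ℓ).nullMeasurableSet (measure_ne_top _ _),
      hunion, tsub_self]

theorem ae_succ_lt (hY : IsCoalChain Λ μ Y n) (hg : ∀ b : ℕ, 2 ≤ b → 0 < coalG Λ b) :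
    ∀ᵐ ω ∂μ, ∀ k, 2 ≤ Y k ω → Y (k + 1) ω < Y k ω := by
  refine ae_all_iff.2 fun k => ?_
  -- cover the exceptional event by countably many cylinders `{(Y₀, …, Y_k) = v}`
  let path : (Fin (k + 1) → ℕ) → ℕ → ℕ := fun v j => if h : j < k + 1 then v ⟨j, h⟩ else 0
  refine measure_mono_null (fun ω hω => Set.mem_iUnion.2 ⟨fun j : Fin (k + 1) => Y j ω, ?_⟩)
    (measure_iUnion_null fun v => hY.measure_cylinder_not_lt hg k (path v))
  simp only [Set.mem_compl_iff, Set.mem_ofPred_eq, Classical.not_imp, not_lt] at hω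
  exact ⟨fun j hj => by simp [path, hj], hω⟩

theorem ae_isDescentPath (hY : IsCoalChain Λ μ Y n) (hg : ∀ b : ℕ, 2 ≤ b → 0 < coalG Λ b) :
    ∀ᵐ ω ∂μ, IsDescentPath (fun k => Y k ω) := by
  filter_upwards [hY.ae_succ_lt hg] with ω hω
  refine ⟨fun k => hY.2.2.1 k ω, fun k => ?_, hω⟩
  rcases (hY.2.2.1 k ω).eq_or_lt with h | h
  · exact (hY.2.2.2.1 k ω h.symm).trans_le h.le
  · exact (hω k h).le

end IsCoalChain

theorem ae_Llen_sub_Ltilde_eq {Ω : Type*} [MeasurableSpace Ω] {μ : Measure Ω}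
    [IsFiniteMeasure μ] {Λ : Measure ℝ} (hg : ∀ b : ℕ, 2 ≤ b → 0 < coalG Λ b)
    {Y : ℕ → Ω → ℕ} {n : ℕ} (hY : IsCoalChain Λ μ Y n) (hn : 2 ≤ n) (Ex : ℕ → Ω → ℝ)
    (t : ℝ) :
    ∀ᵐ ω ∂μ, Llen Λ Y Ex n t ω - Ltilde Λ Y n t ω
      = ∑ k ∈ Finset.range (⌊(n : ℝ) * t⌋₊ + 1), (Y k ω : ℝ) / coalG Λ (Y k ω) * (Ex k ω - 1) := by
  filter_upwards [hY.ae_isDescentPath hg] with ω hω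
  -- `coalG Λ 1 = 0`, so the summand vanishes once the chain is absorbed at `1`
  rw [← hω.sum_range_min_sInf_eq (by simp [hY.2.1, hn])
    (fun k b => (b : ℝ) / coalG Λ b * (Ex k ω - 1)) (by simp [coalG_one]), Llen, Ltilde,
    ← Finset.sum_sub_distrib]
  exact Finset.sum_congr rfl fun k _ => by ring

theorem integral_sq_Llen_sub_Ltilde_le {Ω : Type*} [MeasurableSpace Ω] {μ : Measure Ω}
    [IsProbabilityMeasure μ] {Λ : Measure ℝ} (hg : ∀ b : ℕ, 2 ≤ b → 0 < coalG Λ b)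
    {Y : ℕ → ℕ → Ω → ℕ} (hY : ∀ n, IsCoalChain Λ μ (Y n) n) {Ex : ℕ → Ω → ℝ}
    (hEx : IsExpFamily μ Ex Y) {M : ℝ} (hM : ∀ b : ℕ, |(b : ℝ) / coalG Λ b| ≤ M) {n : ℕ}
    (hn : 2 ≤ n) (t : ℝ) :
    ∫ ω, (Llen Λ (Y n) Ex n t ω - Ltilde Λ (Y n) n t ω) ^ 2 ∂μ
      ≤ ∑ b ∈ Finset.Icc 2 n, ((b : ℝ) / coalG Λ b) ^ 2 := by
  obtain ⟨hEm, htail, hiid, hindep⟩ := hEx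
  have hExp : ∀ k, IsStdExponential μ (Ex k) := fun k => ⟨hEm k, htail k⟩
  set c : ℕ → ℝ := fun b => (b : ℝ) / coalG Λ b
  have hcY : ∀ k, Measurable fun ω => c (Y n k ω) :=
    fun k => (measurable_of_countable c).comp ((hY n).1 k)
  have hB : ∀ k, MemLp (fun ω => Ex k ω - 1) 2 μ :=
    fun k => (hExp k).memLp_two.sub (memLp_const 1)
  have hAB : ∀ i j, IndepFun (fun ω => c (Y n i ω) * c (Y n j ω))
      (fun ω => (Ex i ω - 1) * (Ex j ω - 1)) μ := fun i j =>
    hindep.symm.comp (show Measurable fun y : ℕ → ℕ → ℕ => c (y i n) * c (y j n) by fun_prop)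
      (show Measurable fun e : ℕ → ℝ => (e i - 1) * (e j - 1) by fun_prop)
  have horth : ∀ i j, i ≠ j → ∫ ω, (Ex i ω - 1) * (Ex j ω - 1) ∂μ = 0 := fun i j hij => by
    have hBij : IndepFun (fun ω => Ex i ω - 1) (fun ω => Ex j ω - 1) μ :=
      (hiid.indepFun hij).comp (measurable_id.sub_const 1) (measurable_id.sub_const 1)
    rw [hBij.integral_fun_mul_eq_mul_integral (hB i).aestronglyMeasurable
      (hB j).aestronglyMeasurable, (hExp i).integral_sub_one, zero_mul]
  have hint : ∀ k, Integrable (fun ω => c (Y n k ω) ^ 2) μ := fun k =>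
    .of_bound ((hcY k).pow_const 2).aestronglyMeasurable (M ^ 2) (Eventually.of_forall fun ω => by
      rw [Real.norm_eq_abs, abs_pow]; exact pow_le_pow_left₀ (abs_nonneg _) (hM _) 2)
  rw [integral_congr_ae ((ae_Llen_sub_Ltilde_eq hg (hY n) hn Ex t).mono fun ω h => by rw [h]),
    integral_sq_finsetSum_mul_of_indepFun (fun k => (hcY k).aestronglyMeasurable)
      (fun k ω => hM _) hB hAB horth]
  simp only [(hExp _).integral_sub_one_sq, mul_one]
  rw [← integral_finsetSum _ fun k _ => hint k]
  calc ∫ ω, ∑ k ∈ Finset.range (⌊(n : ℝ) * t⌋₊ + 1), c (Y n k ω) ^ 2 ∂μ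
      ≤ ∫ _, ∑ b ∈ Finset.Icc 2 n, c b ^ 2 ∂μ := by
        refine integral_mono_ae (integrable_finsetSum _ fun k _ => hint k) (integrable_const _) ?_
        filter_upwards [(hY n).ae_isDescentPath hg] with ω hω
        simpa [(hY n).2.1] using hω.sum_range_le_sum_Icc (h := fun b => c b ^ 2)
          (fun b => sq_nonneg _) (by simp [c, coalG_one]) _
    _ = ∑ b ∈ Finset.Icc 2 n, c b ^ 2 := by simp

theorem integral_sq_Llen_sub_Ltilde_le_sum_rpow {Ω : Type*} [MeasurableSpace Ω]
    {μ : Measure Ω} [IsProbabilityMeasure μ] {Λ : Measure ℝ} {Y : ℕ → ℕ → Ω → ℕ}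
    (hY : ∀ n, IsCoalChain Λ μ (Y n) n) {Ex : ℕ → Ω → ℝ} (hEx : IsExpFamily μ Ex Y)
    {α a : ℝ} (hα : 1 ≤ α) (ha : 0 < a)
    (hal : ∀ b : ℕ, 2 ≤ b → a * (b : ℝ) ^ α ≤ coalG Λ b) {n : ℕ} (hn : 2 ≤ n) (t : ℝ) :
    ∫ ω, (Llen Λ (Y n) Ex n t ω - Ltilde Λ (Y n) n t ω) ^ 2 ∂μ
      ≤ a⁻¹ ^ 2 * ∑ b ∈ Finset.Icc 2 n, (b : ℝ) ^ (2 - 2 * α) := by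
  have hg : ∀ b : ℕ, 2 ≤ b → 0 < coalG Λ b := fun b hb =>
    lt_of_lt_of_le (by positivity) (hal b hb)
  have hc : ∀ b : ℕ, 2 ≤ b →
      0 ≤ (b : ℝ) / coalG Λ b ∧ (b : ℝ) / coalG Λ b ≤ a⁻¹ * (b : ℝ) ^ (1 - α) :=
    fun b hb => by
      have hb' : (0 : ℝ) < b := by positivity
      refine ⟨by positivity [hg b hb], ?_⟩
      calc (b : ℝ) / coalG Λ b ≤ b / (a * (b : ℝ) ^ α) :=
            div_le_div_of_nonneg_left hb'.le (by positivity) (hal b hb)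
        _ = a⁻¹ * (b : ℝ) ^ (1 - α) := by rw [Real.rpow_sub hb', Real.rpow_one]; field_simp
  have hM : ∀ b : ℕ, |(b : ℝ) / coalG Λ b| ≤ a⁻¹ := fun b => by
    rcases lt_or_ge b 2 with hb | hb
    · interval_cases b <;> simp [coalG_one, ha.le]
    · rw [abs_of_nonneg (hc b hb).1]
      refine (hc b hb).2.trans (mul_le_of_le_one_right (by positivity)
        (Real.rpow_le_one_of_one_le_of_nonpos (by exact_mod_cast (by omega : 1 ≤ b)) (by linarith)))
  calc ∫ ω, (Llen Λ (Y n) Ex n t ω - Ltilde Λ (Y n) n t ω) ^ 2 ∂μ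
      ≤ ∑ b ∈ Finset.Icc 2 n, ((b : ℝ) / coalG Λ b) ^ 2 :=
        integral_sq_Llen_sub_Ltilde_le hg hY hEx hM hn t
    _ ≤ ∑ b ∈ Finset.Icc 2 n, (a⁻¹ * (b : ℝ) ^ (1 - α)) ^ 2 := by
        refine Finset.sum_le_sum fun b hb => ?_
        obtain ⟨h0, h1⟩ := hc b (Finset.mem_Icc.1 hb).1
        exact pow_le_pow_left₀ h0 h1 2
    _ = a⁻¹ ^ 2 * ∑ b ∈ Finset.Icc 2 n, (b : ℝ) ^ (2 - 2 * α) := by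
        rw [Finset.mul_sum]
        refine Finset.sum_congr rfl fun b _ => ?_
        rw [mul_pow, ← Real.rpow_mul_natCast (Nat.cast_nonneg _)]
        ring_nf

theorem L_minus_Ltilde_bound_general
    {Ω : Type*} [MeasurableSpace Ω] (μ : Measure Ω) [IsProbabilityMeasure μ]
    (α C₀ ζ : ℝ) (hα₁ : 1 < α)
    (Λ : Measure ℝ) [IsFiniteMeasure Λ]
    (hg : ∀ b : ℕ, 2 ≤ b → 0 < coalG Λ b)
    (hC₀ : 0 < C₀) (hζ : 1 - 1 / α < ζ) (hρ : RhoBound Λ C₀ α ζ)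
    (Y : ℕ → ℕ → Ω → ℕ) (hY : ∀ n, IsCoalChain Λ μ (Y n) n)
    (Ex : ℕ → Ω → ℝ) (hEx : IsExpFamily μ Ex Y) :
    ∃ C : ℝ, ∀ n : ℕ, 2 ≤ n → ∀ t : ℝ, 0 ≤ t →
      (α < 3 / 2 →
        (∫ ω, (Llen Λ (Y n) Ex n t ω - Ltilde Λ (Y n) n t ω) ^ 2 ∂μ)
          ≤ C * (n : ℝ) ^ (3 - 2 * α)) ∧
      (α = 3 / 2 →
        (∫ ω, (Llen Λ (Y n) Ex n t ω - Ltilde Λ (Y n) n t ω) ^ 2 ∂μ)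
          ≤ C * Real.log n) ∧
      (3 / 2 < α →
        (∫ ω, (Llen Λ (Y n) Ex n t ω - Ltilde Λ (Y n) n t ω) ^ 2 ∂μ) ≤ C) := by
  have hζ₀ : 0 < ζ := by
    have : 1 / α < 1 := (div_lt_one (by linarith)).2 hα₁
    linarith
  obtain ⟨a, ha, hal⟩ := exists_pos_mul_rpow_le_coalG Λ (by linarith) hζ₀ hC₀ hρ hg
  have hcore := fun n (hn : 2 ≤ n) t =>
    integral_sq_Llen_sub_Ltilde_le_sum_rpow hY hEx hα₁.le ha hal hn t
  rcases lt_trichotomy α (3 / 2) with hlt | rfl | hgt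
  · refine ⟨a⁻¹ ^ 2 / (3 - 2 * α), fun n hn t _ =>
      ⟨fun _ => ?_, fun h => absurd h hlt.ne, fun h => absurd h hlt.not_gt⟩⟩
    calc _ ≤ _ := hcore n hn t
      _ ≤ a⁻¹ ^ 2 * ((n : ℝ) ^ (2 - 2 * α + 1) / (2 - 2 * α + 1)) := by
          gcongr; exact sum_Icc_two_rpow_le (by linarith) (by linarith) (by omega)
      _ = _ := by ring_nf
  · refine ⟨a⁻¹ ^ 2, fun n hn t _ =>
      ⟨fun h => absurd h (lt_irrefl _), fun _ => ?_, fun h => absurd h (lt_irrefl _)⟩⟩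
    calc _ ≤ _ := hcore n hn t
      _ = a⁻¹ ^ 2 * ∑ b ∈ Finset.Icc 2 n, (b : ℝ)⁻¹ := by norm_num [Real.rpow_neg_one]
      _ ≤ a⁻¹ ^ 2 * Real.log n := by gcongr; exact sum_Icc_two_inv_le_log (by omega)
  · refine ⟨a⁻¹ ^ 2 * ∑' b : ℕ, (b : ℝ) ^ (2 - 2 * α), fun n hn t _ =>
      ⟨fun h => absurd h hgt.not_gt, fun h => absurd h hgt.ne', fun _ => (hcore n hn t).trans ?_⟩⟩
    gcongr
    exact (Real.summable_nat_rpow.2 (by linarith)).sum_le_tsum _ fun b _ => by positivity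

/-- replacing the exponential variables by their means gives
`E[(L_t^{(n)} - L̃_t^{(n)})²] ≤ C n^{3-2α}` if `α < 3/2`, `≤ C log n` if `α = 3/2`, and `≤ C`
if `α > 3/2`. -/
theorem L_minus_Ltilde_bound
    {Ω : Type*} [MeasurableSpace Ω] (μ : Measure Ω) [IsProbabilityMeasure μ]
    (α γ C₀ ζ : ℝ) (hα₁ : 1 < α) (hα₂ : α < 2) (hγ : γ = α - 1)
    (Λ : Measure ℝ) [IsFiniteMeasure Λ]
    (hg : ∀ b : ℕ, 2 ≤ b → 0 < coalG Λ b)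
    (hC₀ : 0 < C₀) (hζ : 1 - 1 / α < ζ) (hρ : RhoBound Λ C₀ α ζ)
    (Y : ℕ → ℕ → Ω → ℕ) (hY : ∀ n, IsCoalChain Λ μ (Y n) n)
    (Ex : ℕ → Ω → ℝ) (hEx : IsExpFamily μ Ex Y) :
    ∃ C : ℝ, ∀ n : ℕ, 2 ≤ n → ∀ t : ℝ, 0 ≤ t →
      (α < 3 / 2 →
        (∫ ω, (Llen Λ (Y n) Ex n t ω - Ltilde Λ (Y n) n t ω) ^ 2 ∂μ)
          ≤ C * (n : ℝ) ^ (3 - 2 * α)) ∧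
      (α = 3 / 2 →
        (∫ ω, (Llen Λ (Y n) Ex n t ω - Ltilde Λ (Y n) n t ω) ^ 2 ∂μ)
          ≤ C * Real.log n) ∧
      (3 / 2 < α →
        (∫ ω, (Llen Λ (Y n) Ex n t ω - Ltilde Λ (Y n) n t ω) ^ 2 ∂μ) ≤ C) :=
  L_minus_Ltilde_bound_general μ α C₀ ζ hα₁ Λ hg hC₀ hζ hρ Y hY Ex hEx
end
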